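/- Let Π be a finite projective plane of even order n with an orthogonal polarity π whose n+1 absolute points all lie on a common line l, and let p = π(l). Then in the polarity graph with loops removed, no triangle contains the vertex p; that is, p has no two neighbors that are adjacent to each other. -/

import Mathlib

/-! Since `l` carries exactly `n + 1` points, the `n + 1` absolute points are all the points of
`l = π p`. So a neighbour `x` of `p` is absolute, and a common neighbour `y` of `x` and `p` lies,
together with `x`, on both `π x` and `π p`. Two distinct points span a unique line, hence
`π x = π p` and `x = p`. -/

namespace Configuration

theorem Nondegenerate.line_eq_of_ne {P L : Type*} [Membership P L] [Nondegenerate P L]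
    {x y : P} {l m : L} (hxy : x ≠ y) (hxl : x ∈ l) (hyl : y ∈ l) (hxm : x ∈ m) (hym : y ∈ m) :
    l = m :=
  (Nondegenerate.eq_or_eq hxl hyl hxm hym).resolve_left hxy

namespace ProjectivePlane

variable {P L : Type*} [Membership P L] [ProjectivePlane P L] [Finite P] [Finite L]

theorem ncard_setOf_mem (l : L) : {x : P | x ∈ l}.ncard = order P L + 1 := by
  rw [← Nat.card_coe_set_eq]
  exact pointCount_eq P l

theorem mem_self_of_ncard_setOf_mem_self {π : P → L} {l : L} (habs : ∀ x, x ∈ π x → x ∈ l)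
    (hcard : {x | x ∈ π x}.ncard = order P L + 1) {x : P} (hx : x ∈ l) : x ∈ π x := by
  have hset : {x | x ∈ π x} = {x : P | x ∈ l} :=
    Set.eq_of_subset_of_ncard_le habs (by rw [hcard, ncard_setOf_mem]) (Set.toFinite _)
  exact hset.ge hx

end ProjectivePlane

end Configuration

open Configuration in
theorem no_triangle_through_pole_general
    {P L : Type*} [Membership P L] [Fintype P] [Fintype L]
    [Configuration.ProjectivePlane P L]
    (n : ℕ) (hord : Configuration.ProjectivePlane.order P L = n)
    (π : P ≃ L) (hπ : ∀ p q : P, p ∈ π q ↔ q ∈ π p)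
    (horth : {x : P | x ∈ π x}.ncard = n + 1)
    (l : L) (habs : ∀ x : P, x ∈ π x → x ∈ l)
    (p : P) (hp : π p = l) :
    ∀ x y : P, x ≠ p → y ≠ p → x ≠ y → x ∈ π p → y ∈ π p → x ∉ π y := by
  intro x y hxp _ hxy hx hy hxy_adj
  rw [hp] at hx hy
  have hxx : x ∈ π x :=
    ProjectivePlane.mem_self_of_ncard_setOf_mem_self habs (hord ▸ horth) hx
  have hyx : y ∈ π x := (hπ x y).mp hxy_adj
  have hpolar : π x = π p := hp ▸ Nondegenerate.line_eq_of_ne hxy hxx hyx hx hy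
  exact hxp (π.injective hpolar)

/-- Let `Π` be a finite projective plane of even order `n` with an
orthogonal polarity `π` whose `n + 1` absolute points all lie on a common line `l`, and let
`p` be the pole of `l` (`π p = l`).  Then no triangle of the loopless polarity graph
contains `p`: no two distinct neighbors of `p` are adjacent to each other. -/
theorem no_triangle_through_pole
    {P L : Type*} [Membership P L] [Fintype P] [Fintype L]
    [Configuration.ProjectivePlane P L]
    (n : ℕ) (hord : Configuration.ProjectivePlane.order P L = n) (hn : Even n)
    (π : P ≃ L) (hπ : ∀ p q : P, p ∈ π q ↔ q ∈ π p)
    (horth : {x : P | x ∈ π x}.ncard = n + 1)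
    (l : L) (habs : ∀ x : P, x ∈ π x → x ∈ l)
    (p : P) (hp : π p = l) :
    ∀ x y : P, x ≠ p → y ≠ p → x ≠ y → x ∈ π p → y ∈ π p → x ∉ π y :=
  no_triangle_through_pole_general n hord π hπ horth l habs p hp
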